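/- The (k+1)-limited propagating D0L system over {a,b,c} with axiom c and rules a→bb, b→b, c→a^{(k+1)m} generates exactly the language L_m = {c} ∪ {x₁⋯x_{(k+1)m} | x_i ∈ {a,bb}, the number of a-blocks is a multiple of k+1}, for all k ≥ 1 and m ≥ 1. -/

import Mathlib

/-!
A limited step is determined by a marking of the positions of the word: the marked occurrences
are rewritten, and exactly `min (k+1) |v|_x` occurrences of each letter `x` must be marked. Since
`b → b`, marks on `b` change nothing, so on a word made of `a`- and `bb`-blocks a step just turns
`min (k+1) #a` of its `a`'s into `bb`'s. After the first step `c → a^{(k+1)m}` the number of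
`a`-blocks thus starts at `(k+1)m` and drops by `k+1` while positive, so it stays a multiple of
`k+1`. Conversely, a block word with `(k+1)j` `a`-blocks is reached from one with `(k+1)(j+1)`,
obtained by turning `k+1` of its `bb`-blocks back into `a`'s.
-/

/-- One k-limited derivation step: for each letter x, exactly min(k, |v|_x) occurrences
of x in v are rewritten, each by some rule of R with left side x; the remaining
occurrences stay unchanged. -/
def klStep {V : Type*} [DecidableEq V] (k : ℕ) (R : Set (V × List V)) (v w : List V) : Prop :=
  ∃ (S : Finset (Fin v.length)) (f : Fin v.length → List V),
    (∀ x : V, (S.filter (fun i => v.get i = x)).card = min k (v.count x)) ∧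
    (∀ i ∈ S, (v.get i, f i) ∈ R) ∧
    (∀ i, i ∉ S → f i = [v.get i]) ∧
    w = (List.ofFn f).flatten

/-- Deterministic k-limited step with rule function P. -/
def detStep {V : Type*} [DecidableEq V] (k : ℕ) (P : V → List V) : List V → List V → Prop :=
  klStep k {p | p.2 = P p.1}

/-- The language generated from axiom ω by a step relation. -/
def lang {V : Type*} (step : List V → List V → Prop) (ω : List V) : Set (List V) :=
  {w | Relation.ReflTransGen step ω w}

inductive V3 : Type
  | a | b | c
deriving DecidableEq

instance instFintypeV3 : Fintype V3 :=
  ⟨{V3.a, V3.b, V3.c}, fun x => by cases x <;> simp⟩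

open V3

/-- L_m = {c} ∪ {x₁⋯x_{(k+1)m} | xᵢ ∈ {a,bb}, number of a-blocks a multiple of k+1}. -/
def Lm (k m : ℕ) : Set (List V3) :=
  {[c]} ∪ {z | ∃ bs : List (List V3),
    bs.length = (k + 1) * m ∧ (∀ x ∈ bs, x = [a] ∨ x = [b, b]) ∧
    (∃ j ≤ m, bs.count [a] = (k + 1) * j) ∧ z = bs.flatten}

/-- The rules a→bb, b→b, c→a^{(k+1)m}. -/
def P15 (k m : ℕ) : V3 → List V3
  | a => [b, b] | b => [b] | c => List.replicate ((k + 1) * m) a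

theorem List.countP_ofFn {α : Type*} (p : α → Bool) {n : ℕ} (f : Fin n → α) :
    (List.ofFn f).countP p = (Finset.univ.filter fun i => p (f i)).card := by
  induction n with
  | zero => simp
  | succ n ih =>
    rw [List.ofFn_succ, List.countP_cons, ih, Finset.card_filter, Finset.card_filter,
      Fin.sum_univ_succ, add_comm]

theorem List.zipWith_ofFn_right {α β γ : Type*} (h : α → β → γ) (v : List α)
    (g : Fin v.length → β) :
    List.zipWith h v (List.ofFn g) = List.ofFn fun i => h (v.get i) (g i) := by
  apply List.ext_getElem <;> simp

section Marking

variable {V : Type*}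

def markedRewrite (P : V → List V) (v : List V) (r : List Bool) : List V :=
  (List.zipWith (fun x t => if t then P x else [x]) v r).flatten

theorem markedRewrite_ofFn (P : V → List V) (v : List V) (g : Fin v.length → Bool) :
    markedRewrite P v (List.ofFn g) =
      (List.ofFn fun i => if g i then P (v.get i) else [v.get i]).flatten := by
  rw [markedRewrite, List.zipWith_ofFn_right]

@[simp]
theorem markedRewrite_nil (P : V → List V) (r : List Bool) : markedRewrite P [] r = [] := rfl

@[simp]
theorem markedRewrite_cons (P : V → List V) (x : V) (t : Bool) (v : List V) (r : List Bool) :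
    markedRewrite P (x :: v) (t :: r) = (if t then P x else [x]) ++ markedRewrite P v r := by
  simp [markedRewrite]

variable [DecidableEq V]

theorem count_zip_ofFn (v : List V) (g : Fin v.length → Bool) (x : V) :
    (v.zip (List.ofFn g)).count (x, true) =
      (Finset.univ.filter fun i => v.get i = x ∧ g i = true).card := by
  rw [List.zip_eq_zipWith, List.zipWith_ofFn_right, List.count, List.countP_ofFn]
  simp

theorem detStep_iff_exists_marking (k : ℕ) (P : V → List V) (v w : List V) :
    detStep k P v w ↔ ∃ r : List Bool, r.length = v.length ∧
      (∀ x, (v.zip r).count (x, true) = min k (v.count x)) ∧ w = markedRewrite P v r := by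
  constructor
  · rintro ⟨S, f, hcard, hrule, hfixed, rfl⟩
    refine ⟨List.ofFn fun i => decide (i ∈ S), by simp, fun x => ?_, ?_⟩
    · rw [count_zip_ofFn, ← hcard x]
      congr 1
      ext i
      simp [and_comm]
    · rw [markedRewrite_ofFn]
      congr 2
      funext i
      by_cases hi : i ∈ S
      · simpa [hi] using hrule i hi
      · simpa [hi] using hfixed i hi
  · rintro ⟨r, hlen, hcount, rfl⟩
    obtain ⟨g, rfl⟩ : ∃ g : Fin v.length → Bool, r = List.ofFn g :=
      ⟨fun i => r[i], List.ext_getElem (by simp [hlen]) (by simp)⟩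
    refine ⟨Finset.univ.filter fun i => g i = true,
      fun i => if g i then P (v.get i) else [v.get i], fun x => ?_, fun i hi => ?_,
      fun i hi => ?_, markedRewrite_ofFn P v g⟩
    · rw [← hcount x, count_zip_ofFn, Finset.filter_filter]
      simp only [and_comm]
    · simp_all
    · simp_all

theorem detStep_singleton_iff {k : ℕ} (hk : 1 ≤ k) (P : V → List V) (x : V) (w : List V) :
    detStep k P [x] w ↔ w = P x := by
  rw [detStep_iff_exists_marking]
  constructor
  · rintro ⟨r, hlen, hcount, rfl⟩
    obtain ⟨t, rfl⟩ := List.length_eq_one_iff.mp hlen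
    have ht : t = true := by simpa [List.count_singleton, hk] using hcount x
    simp [ht]
  · rintro rfl
    refine ⟨[true], rfl, fun y => ?_, by simp⟩
    by_cases h : x = y <;> simp [h, hk]

theorem exists_marking_count_eq_of_fixed {P : V → List V} {x : V} (hx : P x = [x]) :
    ∀ (v : List V) (r : List Bool), r.length = v.length → ∀ n ≤ v.count x,
      ∃ r' : List Bool, r'.length = v.length ∧ (v.zip r').count (x, true) = n ∧
        (∀ y ≠ x, (v.zip r').count (y, true) = (v.zip r).count (y, true)) ∧
        markedRewrite P v r' = markedRewrite P v r
  | [], [], _, n, hn => ⟨[], rfl, by simp at hn; simp [hn], fun _ _ => rfl, rfl⟩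
  | y :: v, t :: r, hlen, n, hn => by
    by_cases hy : y = x
    · subst hy
      by_cases hn' : n ≤ v.count y
      · obtain ⟨r', hlen', hx', hother, hrw⟩ :=
          exists_marking_count_eq_of_fixed hx v r (by simpa using hlen) n hn'
        refine ⟨false :: r', by simpa using hlen', by simpa using hx', fun z hz => ?_, ?_⟩
        · simp [hother z hz, Ne.symm hz]
        · cases t <;> simp [hx, hrw]
      · obtain ⟨r', hlen', hx', hother, hrw⟩ :=
          exists_marking_count_eq_of_fixed hx v r (by simpa using hlen) (n - 1)
            (by simp at hn; omega)
        refine ⟨true :: r', by simpa using hlen', by simp at hn; simp [hx']; omega,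
          fun z hz => ?_, ?_⟩
        · simp [hother z hz, Ne.symm hz]
        · cases t <;> simp [hx, hrw]
    · obtain ⟨r', hlen', hx', hother, hrw⟩ :=
        exists_marking_count_eq_of_fixed hx v r (by simpa using hlen) n (by simpa [hy] using hn)
      refine ⟨t :: r', by simpa using hlen', by simp [hx', hy], fun z hz => ?_, by simp [hrw]⟩
      simp [List.count_cons, hother z hz]

end Marking

/-- A word of `L_m` is coded by its list of blocks, `true` for an `a`-block and `false` for a
`bb`-block; as `false < true`, `List.Forall₂ (· ≤ ·) ts' ts` says that `ts'` comes from `ts` by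
turning `a`-blocks into `bb`-blocks. -/
def block : Bool → List V3
  | true => [a]
  | false => [b, b]

def blockWord (ts : List Bool) : List V3 := (ts.map block).flatten

@[simp]
theorem blockWord_nil : blockWord [] = [] := rfl

@[simp]
theorem blockWord_cons (t : Bool) (ts : List Bool) :
    blockWord (t :: ts) = block t ++ blockWord ts := by
  simp [blockWord]

theorem blockWord_replicate_true (n : ℕ) :
    blockWord (List.replicate n true) = List.replicate n a := by
  simp [blockWord, block]

theorem block_injective : Function.Injective block := by
  intro s t h
  cases s <;> cases t <;> simp_all [block]

theorem count_a_blockWord (ts : List Bool) : (blockWord ts).count a = ts.count true := by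
  induction ts with
  | nil => rfl
  | cons t ts ih => cases t <;> simp [block, ih]

theorem count_c_blockWord (ts : List Bool) : (blockWord ts).count c = 0 := by
  induction ts with
  | nil => rfl
  | cons t ts ih => cases t <;> simp [block, ih]

theorem exists_map_block_eq {bs : List (List V3)} (h : ∀ x ∈ bs, x = [a] ∨ x = [b, b]) :
    ∃ ts : List Bool, ts.map block = bs := by
  induction bs with
  | nil => exact ⟨[], rfl⟩
  | cons x bs ih =>
    obtain ⟨ts, rfl⟩ := ih fun y hy => h y (List.mem_cons_of_mem x hy)
    rcases h x List.mem_cons_self with rfl | rfl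
    · exact ⟨true :: ts, rfl⟩
    · exact ⟨false :: ts, rfl⟩

theorem mem_Lm_iff {k m : ℕ} {w : List V3} :
    w ∈ Lm k m ↔ w = [c] ∨ ∃ ts : List Bool, ts.length = (k + 1) * m ∧
      (∃ j ≤ m, ts.count true = (k + 1) * j) ∧ w = blockWord ts := by
  have hcount (ts : List Bool) : (ts.map block).count [a] = ts.count true :=
    List.count_map_of_injective ts block block_injective true
  simp only [Lm, Set.mem_union, Set.mem_singleton_iff, Set.mem_ofPred_eq]
  refine or_congr_right ⟨?_, ?_⟩
  · rintro ⟨bs, hlen, hblocks, hj, rfl⟩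
    obtain ⟨ts, rfl⟩ := exists_map_block_eq hblocks
    exact ⟨ts, by simpa using hlen, by simpa [hcount] using hj, rfl⟩
  · rintro ⟨ts, hlen, hj, rfl⟩
    refine ⟨ts.map block, by simpa using hlen, ?_, by simpa [hcount] using hj, rfl⟩
    simp only [List.mem_map]
    rintro _ ⟨t, -, rfl⟩
    cases t <;> simp [block]

theorem exists_markedRewrite_blockWord_eq (k m : ℕ) : ∀ (ts r : List Bool),
    r.length = (blockWord ts).length → ∃ ts' : List Bool, List.Forall₂ (· ≤ ·) ts' ts ∧
      ts'.count true + ((blockWord ts).zip r).count (a, true) = ts.count true ∧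
      markedRewrite (P15 k m) (blockWord ts) r = blockWord ts'
  | [], _, _ => ⟨[], .nil, by simp, by simp⟩
  | true :: ts, t :: r, hlen => by
    obtain ⟨ts', hle, hcount, hrw⟩ :=
      exists_markedRewrite_blockWord_eq k m ts r (by simpa [block] using hlen)
    refine ⟨(!t) :: ts', .cons (by simp) hle, ?_, ?_⟩ <;> cases t <;> simp [block, P15, hrw] <;>
      omega
  | false :: ts, _ :: _ :: r, hlen => by
    obtain ⟨ts', hle, hcount, hrw⟩ :=
      exists_markedRewrite_blockWord_eq k m ts r (by simpa [block] using hlen)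
    refine ⟨false :: ts', .cons le_rfl hle, by simpa [block] using hcount, ?_⟩
    simp [block, P15, hrw]
  | true :: _, [], hlen | false :: _, [], hlen | false :: _, [_], hlen => by
    simp [block] at hlen

theorem exists_marking_blockWord (k m : ℕ) {ts' ts : List Bool}
    (h : List.Forall₂ (· ≤ ·) ts' ts) :
    ∃ r : List Bool, r.length = (blockWord ts).length ∧
      ts'.count true + ((blockWord ts).zip r).count (a, true) = ts.count true ∧
      (∀ y ≠ a, ((blockWord ts).zip r).count (y, true) = 0) ∧
      markedRewrite (P15 k m) (blockWord ts) r = blockWord ts' := by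
  induction h with
  | nil => exact ⟨[], rfl, rfl, fun _ _ => rfl, rfl⟩
  | @cons t' t ts' ts hle _ ih =>
    obtain ⟨r, hlen, hcount, hother, hrw⟩ := ih
    rcases t' with _ | _ <;> rcases t with _ | _
    · refine ⟨false :: false :: r, by simp [block, hlen], by simpa [block] using hcount,
        fun y hy => by simpa [block] using hother y hy, by simp [block, hrw]⟩
    · refine ⟨true :: r, by simp [block, hlen], by simp [block]; omega,
        fun y hy => by simpa [block, Ne.symm hy] using hother y hy, by simp [block, P15, hrw]⟩
    · exact absurd hle (by decide)
    · refine ⟨false :: r, by simp [block, hlen], by simp [block]; omega,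
        fun y hy => by simpa [block] using hother y hy, by simp [block, hrw]⟩

theorem detStep_blockWord_iff {n k m : ℕ} (ts : List Bool) (w : List V3) :
    detStep n (P15 k m) (blockWord ts) w ↔ ∃ ts' : List Bool, List.Forall₂ (· ≤ ·) ts' ts ∧
      ts'.count true + min n (ts.count true) = ts.count true ∧ w = blockWord ts' := by
  rw [detStep_iff_exists_marking]
  constructor
  · rintro ⟨r, hlen, hcount, rfl⟩
    obtain ⟨ts', hle, hc, hrw⟩ := exists_markedRewrite_blockWord_eq k m ts r hlen
    rw [hcount a, count_a_blockWord] at hc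
    exact ⟨ts', hle, hc, hrw⟩
  · rintro ⟨ts', hle, hc, rfl⟩
    obtain ⟨r, hlen, ha, hother, hrw⟩ := exists_marking_blockWord k m hle
    obtain ⟨r', hlen', hb, hother', hrw'⟩ := exists_marking_count_eq_of_fixed
      (P := P15 k m) (x := b) rfl _ r hlen _ (min_le_right n ((blockWord ts).count b))
    refine ⟨r', hlen', fun x => ?_, (hrw'.trans hrw).symm⟩
    cases x with
    | a => rw [hother' a (by decide), count_a_blockWord]; omega
    | b => exact hb
    | c => rw [hother' c (by decide), hother c (by decide), count_c_blockWord, Nat.min_zero]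

theorem detStep_mem_Lm {k m : ℕ} {v w : List V3} (hv : v ∈ Lm k m)
    (hstep : detStep (k + 1) (P15 k m) v w) : w ∈ Lm k m := by
  rw [mem_Lm_iff] at hv ⊢
  right
  rcases hv with rfl | ⟨ts, hlen, ⟨j, hj, hcount⟩, rfl⟩
  · rw [detStep_singleton_iff (Nat.le_add_left 1 k)] at hstep
    exact ⟨List.replicate ((k + 1) * m) true, by simp, ⟨m, le_rfl, by simp⟩,
      by rw [hstep, blockWord_replicate_true]; rfl⟩
  · obtain ⟨ts', hle, hc, rfl⟩ := (detStep_blockWord_iff ts w).mp hstep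
    refine ⟨ts', hle.length_eq.trans hlen, ⟨j - 1, by omega, ?_⟩, rfl⟩
    rw [hcount] at hc
    rcases j with _ | j
    · simpa using hc
    · rw [Nat.mul_succ] at hc
      rw [Nat.add_sub_cancel]
      omega

theorem List.exists_forall₂_le_count_true_eq_add : ∀ (ts : List Bool) {n : ℕ},
    n ≤ ts.count false → ∃ ts₀ : List Bool, List.Forall₂ (· ≤ ·) ts ts₀ ∧
      ts₀.count true = ts.count true + n
  | [], n, hn => ⟨[], .nil, by simp at hn; simp [hn]⟩
  | false :: ts, 0, _ => ⟨false :: ts, List.forall₂_same.2 fun _ _ => le_rfl, rfl⟩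
  | false :: ts, n + 1, hn => by
    obtain ⟨ts₀, hle, hc⟩ := exists_forall₂_le_count_true_eq_add ts (n := n) (by simpa using hn)
    exact ⟨true :: ts₀, .cons (by decide) hle, by simp [hc]; omega⟩
  | true :: ts, n, hn => by
    obtain ⟨ts₀, hle, hc⟩ := exists_forall₂_le_count_true_eq_add ts (n := n) (by simpa using hn)
    exact ⟨true :: ts₀, .cons le_rfl hle, by simp [hc]; omega⟩

theorem reflTransGen_blockWord {k m j : ℕ} (hj : j ≤ m) (ts : List Bool)
    (hlen : ts.length = (k + 1) * m) (hcount : ts.count true = (k + 1) * j) :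
    Relation.ReflTransGen (detStep (k + 1) (P15 k m)) [c] (blockWord ts) := by
  induction hj using Nat.decreasingInduction generalizing ts with
  | self =>
    have hts : ts = List.replicate ((k + 1) * m) true :=
      List.eq_replicate_iff.2
        ⟨hlen, fun t ht => (List.count_eq_length.1 (hcount.trans hlen.symm) t ht).symm⟩
    rw [hts, blockWord_replicate_true]
    exact .single ((detStep_singleton_iff (Nat.le_add_left 1 k) _ _ _).2 rfl)
  | of_succ j hj ih =>
    have hfalse : k + 1 ≤ ts.count false := by
      have := List.count_true_add_count_false ts
      have : (k + 1) * (j + 1) ≤ (k + 1) * m := Nat.mul_le_mul_left _ hj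
      rw [Nat.mul_succ] at this
      omega
    obtain ⟨ts₀, hle, hc⟩ := List.exists_forall₂_le_count_true_eq_add ts hfalse
    refine (ih ts₀ (hle.length_eq ▸ hlen) (by rw [hc, hcount, Nat.mul_succ])).tail ?_
    exact (detStep_blockWord_iff ts₀ _).2 ⟨ts, hle, by omega, rfl⟩

theorem stmt15_general (k m : ℕ) :
    lang (detStep (k + 1) (P15 k m)) [c] = Lm k m := by
  ext w
  constructor
  · intro hw
    induction hw with
    | refl => exact Or.inl rfl
    | tail _ hstep ih => exact detStep_mem_Lm ih hstep
  · rw [mem_Lm_iff]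
    rintro (rfl | ⟨ts, hlen, ⟨j, hj, hcount⟩, rfl⟩)
    · exact .refl
    · exact reflTransGen_blockWord hj ts hlen hcount

/-- The (k+1)-limited PD0L system with axiom c and rules a→bb, b→b, c→a^{(k+1)m}
generates exactly L_m. -/
theorem stmt15 (k m : ℕ) (hk : 1 ≤ k) (hm : 1 ≤ m) :
    lang (detStep (k + 1) (P15 k m)) [c] = Lm k m :=
  stmt15_general k m
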